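/- arXiv:2005.05793 — 3 statements merged into one kernel-verified Lean document; each statement's English description precedes it below -/
import Mathlib

section
/- If a k (π k) * a (τ⁻¹ (π k)) (π k) > 0 for every k : Fin n, then the only absolute nilpotent element of E^n_{π,τ} is x = 0 (regardless of the rank of the matrix of structural constants). -/
/-- The product of the evolution algebra `E_{π,τ}(a)` on a finite type `ι`. -/
noncomputable def evolMul {ι : Type*} [Fintype ι] [DecidableEq ι]
    (π τ : Equiv.Perm ι) (a : ι → ι → ℝ) (x y : ι → ℝ) : ι → ℝ :=
  fun j => ∑ i, x i * y i *
    ((if π i = j then a i (π i) else 0) + (if τ i = j then a i (τ i) else 0))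

/-!
The `π k`-th coordinate of `x * x` is `a k (π k) * (x k)^2 + a j (π k) * (x j)^2` with
`j = τ⁻¹ (π k)`. The hypothesis says the two coefficients are nonzero of the same sign, so this
vanishes only when both squares do; in particular `x k = 0`.
-/

lemma Equiv.Perm.sum_mul_ite_apply_eq {ι R : Type*} [Fintype ι] [DecidableEq ι]
    [NonUnitalNonAssocSemiring R] (σ : Equiv.Perm ι) (f g : ι → R) (j : ι) :
    ∑ i, f i * (if σ i = j then g i else 0) = f (σ⁻¹ j) * g (σ⁻¹ j) := by
  simp only [← Equiv.Perm.eq_inv_iff_eq, mul_ite, mul_zero, Finset.sum_ite_eq', Finset.mem_univ,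
    if_true]

lemma evolMul_apply {ι : Type*} [Fintype ι] [DecidableEq ι] (π τ : Equiv.Perm ι)
    (a : ι → ι → ℝ) (x y : ι → ℝ) (j : ι) :
    evolMul π τ a x y j = a (π⁻¹ j) j * (x (π⁻¹ j) * y (π⁻¹ j))
      + a (τ⁻¹ j) j * (x (τ⁻¹ j) * y (τ⁻¹ j)) := by
  simp only [evolMul, mul_add, Finset.sum_add_distrib, Equiv.Perm.sum_mul_ite_apply_eq,
    Equiv.Perm.coe_inv, Equiv.apply_symm_apply]
  ring

lemma eq_zero_of_mul_mul_self_add_mul_mul_self_eq_zero {R : Type*} [CommRing R] [LinearOrder R]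
    [IsStrictOrderedRing R] {p q s t : R} (hpq : 0 < p * q) (h : p * (s * s) + q * (t * t) = 0) :
    s = 0 := by
  have hp : p ≠ 0 := left_ne_zero_of_mul hpq.ne'
  -- multiplying by `p` makes both summands nonnegative, whatever the common sign of `p` and `q`
  have hsum : p * p * (s * s) + p * q * (t * t) = 0 := by linear_combination p * h
  have hpt : 0 ≤ p * q * (t * t) := mul_nonneg hpq.le (mul_self_nonneg t)
  have hps : p * p * (s * s) = 0 :=
    le_antisymm (by linarith) (mul_nonneg (mul_self_nonneg p) (mul_self_nonneg s))
  simpa [hp] using hps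

/-- if `a k (π k) * a (τ⁻¹ (π k)) (π k) > 0` for all `k`, then the only
absolute nilpotent element of `E^n_{π,τ}` is `x = 0`. -/
theorem stmt_5 (n : ℕ) (π τ : Equiv.Perm (Fin n)) (a : Fin n → Fin n → ℝ)
    (ha : ∀ k : Fin n, 0 < a k (π k) * a (τ⁻¹ (π k)) (π k)) :
    ∀ x : Fin n → ℝ, evolMul π τ a x x = 0 → x = 0 := by
  intro x hx
  funext k
  have hk := congrFun hx (π k)
  rw [evolMul_apply, Equiv.Perm.coe_inv, Equiv.symm_apply_apply, Pi.zero_apply] at hk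
  exact eq_zero_of_mul_mul_self_add_mul_mul_self_eq_zero (ha k) hk
end

section
/- Suppose b k₀ = 0 and c k₀ = 0 for some k₀ : ZMod p, and b k ≠ 0 and c k ≠ 0 for every k : ZMod p with k ≠ k₀. Then: (a) every absolute nilpotent element x of E^n_{π,τ} satisfies x (l k) = 0 for all k ≠ k₀; (b) conversely, for every real number t there exists an absolute nilpotent element x of E^n_{π,τ} with x (l k₀) = t and x (l k) = 0 for all k ≠ k₀. -/
theorem ZMod.induction_from {p : ℕ} [NeZero p] {P : ZMod p → Prop} (k₀ : ZMod p)
    (base : P k₀) (succ : ∀ k, P k → P (k + 1)) (k : ZMod p) : P k := by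
  have h : ∀ m : ℕ, P (k₀ + m) := by
    intro m
    induction m with
    | zero => simpa using base
    | succ m ih => simpa [add_assoc] using succ _ ih
  simpa using h (k - k₀).val

section EvolutionAlgebra

variable {ι : Type*} [Fintype ι] [DecidableEq ι] (π τ : Equiv.Perm ι) (a : ι → ι → ℝ)

theorem evolMul_self_apply (x : ι → ℝ) (j : ι) :
    evolMul π τ a x x j =
      x (π⁻¹ j) ^ 2 * a (π⁻¹ j) j + x (τ⁻¹ j) ^ 2 * a (τ⁻¹ j) j := by
  simp only [evolMul, mul_add, Finset.sum_add_distrib, mul_ite, mul_zero, sq,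
    ← Equiv.Perm.eq_inv_iff_eq, Finset.sum_ite_eq', Finset.mem_univ, if_true,
    Equiv.Perm.coe_inv, Equiv.apply_symm_apply]

theorem evolMul_self_apply_of_apply_eq {x : ι → ℝ} {i i' : ι} (h : τ i' = π i) :
    evolMul π τ a x x (π i) = x i ^ 2 * a i (π i) + x i' ^ 2 * a i' (τ i') := by
  have hτ : τ⁻¹ (π i) = i' := by rw [← h, Equiv.Perm.coe_inv, Equiv.symm_apply_apply]
  rw [evolMul_self_apply, hτ, Equiv.Perm.coe_inv, Equiv.symm_apply_apply, h]

theorem evolMul_single_self_eq_zero {i : ι} (hπ : a i (π i) = 0) (hτ : a i (τ i) = 0)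
    (t : ℝ) : evolMul π τ a (Pi.single i t) (Pi.single i t) = 0 := by
  funext j
  refine Finset.sum_eq_zero fun i' _ => ?_
  by_cases hi' : i' = i
  · subst hi'
    simp [hπ, hτ]
  · simp [Pi.single_eq_of_ne hi']

end EvolutionAlgebra

/-- along a cycle `l : ZMod p → Fin n` of `τ⁻¹ ∘ π`, if
`b k₀ = 0 = c k₀` for some `k₀` and `b k ≠ 0 ≠ c k` for all `k ≠ k₀`, then (a) every
absolute nilpotent `x` of `E^n_{π,τ}` vanishes at `l k` for all `k ≠ k₀`, and (b) for
every `t : ℝ` there is an absolute nilpotent `x` with `x (l k₀) = t` and `x (l k) = 0`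
for all `k ≠ k₀`. -/
theorem stmt_11 (n p : ℕ) [NeZero p] (π τ : Equiv.Perm (Fin n))
    (a : Fin n → Fin n → ℝ)
    (l : ZMod p → Fin n) (hl : Function.Injective l)
    (hcyc : ∀ k : ZMod p, τ⁻¹ (π (l k)) = l (k + 1))
    (b c : ZMod p → ℝ)
    (hb : ∀ k, b k = a (l k) (π (l k)))
    (hc : ∀ k, c k = a (l k) (τ (l k)))
    (k₀ : ZMod p) (hb0 : b k₀ = 0) (hc0 : c k₀ = 0)
    (hne : ∀ k : ZMod p, k ≠ k₀ → b k ≠ 0 ∧ c k ≠ 0) :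
    (∀ x : Fin n → ℝ, evolMul π τ a x x = 0 →
        ∀ k : ZMod p, k ≠ k₀ → x (l k) = 0) ∧
    (∀ t : ℝ, ∃ x : Fin n → ℝ, evolMul π τ a x x = 0 ∧ x (l k₀) = t ∧
        ∀ k : ZMod p, k ≠ k₀ → x (l k) = 0) := by
  refine ⟨fun x hx => ?_, fun t => ?_⟩
  · have hrel : ∀ k, x (l k) ^ 2 * b k + x (l (k + 1)) ^ 2 * c (k + 1) = 0 := by
      intro k
      have hτ : τ (l (k + 1)) = π (l k) := by rw [← hcyc k, Equiv.Perm.coe_inv, Equiv.apply_symm_apply]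
      rw [hb, hc, ← evolMul_self_apply_of_apply_eq π τ a hτ, hx, Pi.zero_apply]
    have hnext : ∀ k, x (l k) ^ 2 * b k = 0 → k + 1 ≠ k₀ → x (l (k + 1)) = 0 := by
      intro k hk hk₁
      have h := hrel k
      rw [hk, zero_add, mul_eq_zero] at h
      exact pow_eq_zero_iff two_ne_zero |>.mp (h.resolve_right (hne _ hk₁).2)
    have hvanish : ∀ k, x (l k) ^ 2 * b k = 0 := by
      refine ZMod.induction_from k₀ (by rw [hb0, mul_zero]) fun k hk => ?_
      by_cases hk₁ : k + 1 = k₀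
      · rw [hk₁, hb0, mul_zero]
      · rw [hnext k hk hk₁, zero_pow two_ne_zero, zero_mul]
    intro k hk
    simpa using hnext (k - 1) (hvanish _) (by simpa using hk)
  · refine ⟨Pi.single (l k₀) t, ?_, Pi.single_eq_same _ _, fun k hk => ?_⟩
    · exact evolMul_single_self_eq_zero π τ a (hb k₀ ▸ hb0) (hc k₀ ▸ hc0) t
    · exact Pi.single_eq_of_ne (M := fun _ => ℝ) (hl.ne hk) t
end

section
/- Let α, β, γ be permutations of Fin n with γ ∘ α = β ∘ γ (so α and β are conjugate via γ), let τ₀ = id be the identity permutation, and let aMat, bMat : Fin n → Fin n → ℝ be matrices of structural constants satisfying aMat i (α i) = bMat (γ i) (β (γ i)) and aMat i i = bMat (γ i) (γ i) for all i : Fin n. Then the linear equivalence of Fin n → ℝ sending the standard basis vector e_i to e_{γ i} is an isomorphism of non-unital non-associative ℝ-algebras from E^n_{α,τ₀}(aMat) onto E^n_{β,τ₀}(bMat); in particular these two evolution algebras are isomorphic. -/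
/-! Relabelling the basis by a permutation `σ` that intertwines `(π, τ)` with `(π', τ')` and
transports the structural constants is an algebra isomorphism: in coordinates it is
`x ↦ x ∘ σ⁻¹`. -/

theorem evolMul_comp_symm {ι : Type*} [Fintype ι] [DecidableEq ι]
    (σ π τ π' τ' : Equiv.Perm ι) (a b : ι → ι → ℝ)
    (hπ : ∀ i, σ (π i) = π' (σ i)) (hτ : ∀ i, σ (τ i) = τ' (σ i))
    (haπ : ∀ i, a i (π i) = b (σ i) (π' (σ i))) (haτ : ∀ i, a i (τ i) = b (σ i) (τ' (σ i)))
    (x y : ι → ℝ) :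
    evolMul π' τ' b (x ∘ σ.symm) (y ∘ σ.symm) = evolMul π τ a x y ∘ σ.symm := by
  funext j
  simp only [evolMul, Function.comp_apply]
  rw [← Equiv.sum_comp σ]
  refine Finset.sum_congr rfl fun i _ => ?_
  have hshift (ρ ρ' : Equiv.Perm ι) (hρ : σ (ρ i) = ρ' (σ i)) : ρ i = σ.symm j ↔ ρ' (σ i) = j := by
    rw [Equiv.eq_symm_apply, hρ]
  simp only [Equiv.symm_apply_apply, haπ, haτ, hshift π π' (hπ i), hshift τ τ' (hτ i)]

theorem LinearEquiv.funCongrLeft_symm_single {R ι : Type*} [Semiring R] [DecidableEq ι]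
    (σ : Equiv.Perm ι) (i : ι) (r : R) :
    LinearEquiv.funCongrLeft R R σ.symm (Pi.single i r) = Pi.single (σ i) r :=
  Pi.single_comp_equiv σ.symm i r

/-- if `α` and `β` are conjugate via `γ` (`γ ∘ α = β ∘ γ`), `τ₀ = id`, and
`aMat i (α i) = bMat (γ i) (β (γ i))`, `aMat i i = bMat (γ i) (γ i)` for all `i`, then
the linear equivalence sending `e_i` to `e_{γ i}` is an isomorphism from
`E^n_{α,τ₀}(aMat)` onto `E^n_{β,τ₀}(bMat)`. -/
theorem stmt_18 (n : ℕ) (α β γ : Equiv.Perm (Fin n))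
    (hconj : ∀ i : Fin n, γ (α i) = β (γ i))
    (aMat bMat : Fin n → Fin n → ℝ)
    (hab1 : ∀ i : Fin n, aMat i (α i) = bMat (γ i) (β (γ i)))
    (hab2 : ∀ i : Fin n, aMat i i = bMat (γ i) (γ i)) :
    ∃ e : (Fin n → ℝ) ≃ₗ[ℝ] (Fin n → ℝ),
      (∀ i : Fin n, e (Pi.single i 1) = Pi.single (γ i) (1 : ℝ)) ∧
      (∀ x y : Fin n → ℝ, e (evolMul α 1 aMat x y) = evolMul β 1 bMat (e x) (e y)) :=
  ⟨LinearEquiv.funCongrLeft ℝ ℝ γ.symm, fun i => LinearEquiv.funCongrLeft_symm_single γ i 1,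
    fun x y => (evolMul_comp_symm γ α 1 β 1 aMat bMat hconj (fun _ => rfl) hab1 hab2 x y).symm⟩
end
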